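/- Let (G, α) be an edge labeled graph over a Prüfer domain R. Then for any vertices u, v, w ∈ V(G), ⋂_{P ∈ P(v,w)} α(P) ⊆ (⋂_{P ∈ P(u,v)} α(P)) + (⋂_{P ∈ P(u,w)} α(P)), where P(a,b) is the set of all paths from a to b and α(P) is the sum of the ideals labeling the edges of P. -/

import Mathlib

/-!
For paths `P` from `u` to `v` and `Q` from `u` to `w`, the walk `P⁻¹Q` from `v` to `w` contains a
path using only edges of `P` and `Q`, so the left-hand side lies in `α(P) + α(Q)` for every such
pair. In a Prüfer domain the ideal lattice is distributive, `(A + B) ∩ (A + C) = A + B ∩ C`,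
because for any `b, c` there are `x + y = 1` with `x b ∈ (c)` and `y c ∈ (b)`. Since there are
finitely many paths, distributivity turns `⋂_{P,Q} (α(P) + α(Q))` into the right-hand side.
-/

open SimpleGraph

/-- A generalized spline on an edge labeled graph. -/
def IsSpline {V R : Type*} [CommRing R] (G : SimpleGraph V)
    (α : Sym2 V → Ideal R) (ρ : V → R) : Prop :=
  ∀ u v : V, G.Adj u v → ρ u - ρ v ∈ α s(u, v)

/-- The sum of the ideals labeling the edges of a walk. -/
def walkIdealSum {V R : Type*} [CommRing R] (G : SimpleGraph V)
    (α : Sym2 V → Ideal R) {u w : V} (p : G.Walk u w) : Ideal R :=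
  (p.edges.map α).sum

/-- The intersection of `α(P)` over all paths `P` from `u` to `w`. -/
def pathsInf {V R : Type*} [CommRing R] (G : SimpleGraph V)
    (α : Sym2 V → Ideal R) (u w : V) : Ideal R :=
  ⨅ (p : G.Walk u w) (_ : p.IsPath), walkIdealSum G α p

/-- The Universal Difference Property. -/
def UDP {V R : Type*} [CommRing R] (G : SimpleGraph V)
    (α : Sym2 V → Ideal R) : Prop :=
  ∀ u w : V, G.Reachable u w → ∀ x ∈ pathsInf G α u w,
    ∃ ρ : V → R, IsSpline G α ρ ∧ ρ u - ρ w = x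

/-- A Prüfer domain: every nonzero finitely generated ideal is invertible. -/
def IsPruferDomain (R : Type*) [CommRing R] [IsDomain R] : Prop :=
  ∀ I : Ideal R, I ≠ ⊥ → I.FG →
    IsUnit (I : FractionalIdeal (nonZeroDivisors R) (FractionRing R))

open scoped nonZeroDivisors

namespace IsPruferDomain
variable {R : Type*} [CommRing R] [IsDomain R]

theorem exists_add_eq_one_mul_mem_span (hR : IsPruferDomain R) (b c : R) :
    ∃ x y : R, x + y = 1 ∧ x * b ∈ Ideal.span {c} ∧ y * c ∈ Ideal.span {b} := by
  by_cases hb : b = 0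
  · exact ⟨1, 0, by ring, by simp [hb], by simp⟩
  set K := FractionRing R
  set f := algebraMap R K
  have hf : Function.Injective f := IsFractionRing.injective R K
  set I : Ideal R := Ideal.span {b, c}
  have hbI : b ∈ I := Ideal.subset_span (by simp)
  have hcI : c ∈ I := Ideal.subset_span (by simp)
  have hI : I ≠ ⊥ := fun h => hb <| (Submodule.eq_bot_iff _).mp h b hbI
  obtain ⟨e, he⟩ := hR I hI (Submodule.fg_span (Set.toFinite _))
  set J : FractionalIdeal R⁰ K := ↑e⁻¹
  have hIJ : (I : FractionalIdeal R⁰ K) * J = 1 := by rw [← he]; exact_mod_cast e.mul_inv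
  have hI_span : ((I : FractionalIdeal R⁰ K) : Submodule R K) =
      Submodule.span R {f b} ⊔ Submodule.span R {f c} := by
    rw [FractionalIdeal.coe_coeIdeal, IsLocalization.coeSubmodule_span, Set.image_pair,
      Submodule.span_insert]
  have integral : ∀ r ∈ I, ∀ z ∈ J, ∃ t : R, f t = f r * z := fun r hr z hz => by
    rw [← FractionalIdeal.mem_one_iff R⁰, ← hIJ]
    exact FractionalIdeal.mul_mem_mul (FractionalIdeal.mem_coeIdeal_of_mem R⁰ hr) hz
  obtain ⟨X, hX, Y, hY, hone⟩ : ∃ X ∈ J, ∃ Y ∈ J, f b * X + f c * Y = 1 := by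
    have h1 : (1 : K) ∈ ((I : FractionalIdeal R⁰ K) * J : FractionalIdeal R⁰ K) := by
      rw [hIJ]; exact FractionalIdeal.one_mem_one _
    rw [← FractionalIdeal.mem_coe, FractionalIdeal.coe_mul, hI_span, Submodule.sup_mul,
      Submodule.mem_sup] at h1
    obtain ⟨_, hbX, _, hcY, h⟩ := h1
    obtain ⟨X, hX, rfl⟩ := Submodule.mem_span_singleton_mul.mp hbX
    obtain ⟨Y, hY, rfl⟩ := Submodule.mem_span_singleton_mul.mp hcY
    exact ⟨X, hX, Y, hY, h⟩
  -- `x = cY` and `y = bX` lie in `I J = R`, and `x b = c (bY)`, `y c = b (cX)`.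
  obtain ⟨x, hx⟩ := integral c hcI Y hY
  obtain ⟨y, hy⟩ := integral b hbI X hX
  obtain ⟨s, hs⟩ := integral b hbI Y hY
  obtain ⟨t, ht⟩ := integral c hcI X hX
  refine ⟨x, y, hf ?_, Ideal.mem_span_singleton'.mpr ⟨s, hf ?_⟩,
    Ideal.mem_span_singleton'.mpr ⟨t, hf ?_⟩⟩
  · rw [map_add, hx, hy, map_one, ← hone]; ring
  · rw [map_mul, map_mul, hx, hs]; ring
  · rw [map_mul, map_mul, hy, ht]; ring

theorem sup_inf_sup_le (hR : IsPruferDomain R) (A B C : Ideal R) :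
    (A ⊔ B) ⊓ (A ⊔ C) ≤ A ⊔ B ⊓ C := by
  rintro z ⟨hzB, hzC⟩
  obtain ⟨a, ha, b, hb, rfl⟩ := Submodule.mem_sup.mp hzB
  obtain ⟨a', ha', c, hc, hac⟩ := Submodule.mem_sup.mp hzC
  obtain ⟨x, y, hxy, hxb, hyc⟩ := hR.exists_add_eq_one_mul_mem_span b c
  have hsplit : a + b = (x * a + y * a') + (x * b + y * c) := by
    linear_combination (a + b) * hxy.symm - y * hac
  rw [hsplit]
  -- `x b ∈ B ∩ (c) ⊆ B ∩ C` and `y c ∈ C ∩ (b) ⊆ B ∩ C`.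
  refine Submodule.add_mem_sup (add_mem (A.mul_mem_left x ha) (A.mul_mem_left y ha')) ⟨?_, ?_⟩
  · exact add_mem (B.mul_mem_left x hb) ((Ideal.span_singleton_le_iff_mem B).mpr hb hyc)
  · exact add_mem ((Ideal.span_singleton_le_iff_mem C).mpr hc hxb) (C.mul_mem_left y hc)

end IsPruferDomain

section DistribSupInf
variable {α ι κ : Type*} [CompleteLattice α]

theorem iInf_sup_le_sup_iInf_of_distrib [Finite ι]
    (hd : ∀ a b c : α, (a ⊔ b) ⊓ (a ⊔ c) ≤ a ⊔ b ⊓ c) (a : α) (f : ι → α) :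
    ⨅ i, (a ⊔ f i) ≤ a ⊔ ⨅ i, f i := by
  have := Fintype.ofFinite ι
  classical
  rw [← Finset.inf_univ_eq_iInf, ← Finset.inf_univ_eq_iInf]
  induction (Finset.univ : Finset ι) using Finset.induction with
  | empty => simp
  | insert i s _ ih =>
    rw [Finset.inf_insert, Finset.inf_insert]
    exact (inf_le_inf_left _ ih).trans (hd a (f i) (s.inf f))

theorem iInf_iInf_sup_le_of_distrib [Finite ι] [Finite κ]
    (hd : ∀ a b c : α, (a ⊔ b) ⊓ (a ⊔ c) ≤ a ⊔ b ⊓ c)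
    (f : ι → α) (g : κ → α) :
    ⨅ (i) (j), (f i ⊔ g j) ≤ (⨅ i, f i) ⊔ ⨅ j, g j :=
  calc ⨅ (i) (j), (f i ⊔ g j) ≤ ⨅ i, (f i ⊔ ⨅ j, g j) :=
        iInf_mono fun i => iInf_sup_le_sup_iInf_of_distrib hd (f i) g
    _ ≤ (⨅ i, f i) ⊔ ⨅ j, g j := by
      simpa only [sup_comm] using iInf_sup_le_sup_iInf_of_distrib hd (⨅ j, g j) f

end DistribSupInf

section EdgeLabeledGraph
variable {V R : Type*} [CommRing R] (G : SimpleGraph V) (α : Sym2 V → Ideal R)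

theorem walkIdealSum_le_iff {u w : V} (p : G.Walk u w) (I : Ideal R) :
    walkIdealSum G α p ≤ I ↔ ∀ e ∈ p.edges, α e ≤ I := by
  rw [walkIdealSum]
  induction p.edges with
  | nil => simp
  | cons e l ih => simp [Submodule.add_eq_sup, ih]

theorem walkIdealSum_mono {u w u' w' : V} {p : G.Walk u w} {q : G.Walk u' w'}
    (h : p.edges ⊆ q.edges) : walkIdealSum G α p ≤ walkIdealSum G α q :=
  (walkIdealSum_le_iff G α p _).mpr fun _ he =>
    List.le_sum_of_mem (List.mem_map_of_mem (h he))

@[simp]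
theorem walkIdealSum_append {u v w : V} (p : G.Walk u v) (q : G.Walk v w) :
    walkIdealSum G α (p.append q) = walkIdealSum G α p + walkIdealSum G α q := by
  simp [walkIdealSum, Walk.edges_append]

@[simp]
theorem walkIdealSum_reverse {u w : V} (p : G.Walk u w) :
    walkIdealSum G α p.reverse = walkIdealSum G α p := by
  simp [walkIdealSum, Walk.edges_reverse, List.map_reverse, List.sum_reverse]

theorem pathsInf_eq_iInf_path (u w : V) :
    pathsInf G α u w = ⨅ p : G.Path u w, walkIdealSum G α p.1 :=
  iInf_subtype'

theorem pathsInf_le_walkIdealSum [DecidableEq V] {u w : V} (p : G.Walk u w) :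
    pathsInf G α u w ≤ walkIdealSum G α p :=
  (iInf₂_le p.bypass p.bypass_isPath).trans (walkIdealSum_mono G α p.edges_bypass_subset_edges)

end EdgeLabeledGraph

theorem prufer_pathsInf_sub {V R : Type*} [Fintype V] [CommRing R] [IsDomain R]
    (hR : IsPruferDomain R) (G : SimpleGraph V) (α : Sym2 V → Ideal R) (u v w : V) :
    pathsInf G α v w ≤ pathsInf G α u v + pathsInf G α u w := by
  classical
  have hconcat : ∀ (P : G.Path u v) (Q : G.Path u w),
      pathsInf G α v w ≤ walkIdealSum G α P.1 ⊔ walkIdealSum G α Q.1 := fun P Q => by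
    simpa [Submodule.add_eq_sup] using pathsInf_le_walkIdealSum G α (P.1.reverse.append Q.1)
  rw [pathsInf_eq_iInf_path G α u v, pathsInf_eq_iInf_path G α u w, Submodule.add_eq_sup]
  exact (le_iInf₂ hconcat).trans (iInf_iInf_sup_le_of_distrib hR.sup_inf_sup_le _ _)
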